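/- Let n ≥ 1 and let d, d' be positive divisors of n. There exists a quandle automorphism f of the dihedral quandle Z_n^dih with f(0) = 0 and f(d mod n) = d' mod n if and only if d = d'; equivalently, the pairs (0, d) and (0, d') in (Z/nZ)² lie in the same orbit under the componentwise action of the automorphism group of Z_n^dih if and only if d = d'. -/

import Mathlib

/-!
An endomorphism `f` of `Z_n^dih` with `f 0 = 0` satisfies `f (-x) = -f x` and
`f (x + 2y) = f x + 2 f y`, so a two-step induction makes it commute with integer scaling;
since every element of `ZMod n` is an integer cast, `f` is multiplication by `f 1`.
If `f` is moreover injective it preserves additive orders, and `d ∣ n` has additive order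
`n / d` in `ZMod n`, which determines `d`.
-/

/-- A quandle endomorphism of the dihedral quandle `Z_n^dih`. -/
def IsDihedralEnd (n : ℕ) (f : ZMod n → ZMod n) : Prop :=
  ∀ x y : ZMod n, f (2 * y - x) = 2 * f y - f x

/-- A quandle automorphism of the dihedral quandle `Z_n^dih`. -/
def IsDihedralAut (n : ℕ) (f : ZMod n → ZMod n) : Prop :=
  IsDihedralEnd n f ∧ Function.Bijective f

namespace IsDihedralEnd

variable {n : ℕ} {f : ZMod n → ZMod n}

theorem map_neg (hf : IsDihedralEnd n f) (h0 : f 0 = 0) (x : ZMod n) : f (-x) = -f x := by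
  simpa [h0] using hf x 0

theorem map_add_two_mul (hf : IsDihedralEnd n f) (h0 : f 0 = 0) (x y : ZMod n) :
    f (x + 2 * y) = f x + 2 * f y := by
  have h := hf (-x) y
  rw [hf.map_neg h0, sub_neg_eq_add, add_comm] at h
  rw [h, sub_neg_eq_add, add_comm]

theorem map_natCast_mul (hf : IsDihedralEnd n f) (h0 : f 0 = 0) (m : ℕ) (x : ZMod n) :
    f (m * x) = m * f x := by
  induction m using Nat.twoStepInduction with
  | zero => simp [h0]
  | one => simp
  | more k ih _ =>
    calc f ((k + 2 : ℕ) * x) = f (k * x + 2 * x) := by push_cast; ring_nf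
      _ = (k + 2 : ℕ) * f x := by rw [hf.map_add_two_mul h0, ih]; push_cast; ring

theorem map_intCast_mul (hf : IsDihedralEnd n f) (h0 : f 0 = 0) (k : ℤ) (x : ZMod n) :
    f (k * x) = k * f x := by
  obtain ⟨m, rfl | rfl⟩ := Int.eq_nat_or_neg k
  · exact_mod_cast hf.map_natCast_mul h0 m x
  · calc f ((-m : ℤ) * x) = f (-(m * x)) := by push_cast; ring_nf
      _ = (-m : ℤ) * f x := by rw [hf.map_neg h0, hf.map_natCast_mul h0]; push_cast; ring

theorem eq_mul_map_one (hf : IsDihedralEnd n f) (h0 : f 0 = 0) (x : ZMod n) :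
    f x = x * f 1 := by
  simpa [ZMod.intCast_zmod_cast] using hf.map_intCast_mul h0 (ZMod.cast x) 1

end IsDihedralEnd

theorem ZMod.addOrderOf_natCast_of_dvd {n d : ℕ} (hn : n ≠ 0) (hdn : d ∣ n) :
    addOrderOf (d : ZMod n) = n / d := by
  rw [ZMod.addOrderOf_coe d hn, Nat.gcd_eq_right hdn]

theorem IsDihedralAut.addOrderOf_map {n : ℕ} {f : ZMod n → ZMod n} (hf : IsDihedralAut n f)
    (h0 : f 0 = 0) (x : ZMod n) : addOrderOf (f x) = addOrderOf x := by
  have hfun : f = AddMonoidHom.mulRight (f 1) := funext (hf.1.eq_mul_map_one h0)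
  rw [hfun]
  exact addOrderOf_injective _ (hfun ▸ hf.2.1) x

theorem same_orbit_iff_eq_divisor_general (n : ℕ) (hn : 1 ≤ n) (d d' : ℕ)
    (hdn : d ∣ n) (hd'n : d' ∣ n) :
    (∃ f : ZMod n → ZMod n, IsDihedralAut n f ∧
        f 0 = 0 ∧ f (d : ZMod n) = (d' : ZMod n)) ↔ d = d' := by
  constructor
  · rintro ⟨f, hf, h0, hfd⟩
    have horder := hf.addOrderOf_map h0 d
    rw [hfd, ZMod.addOrderOf_natCast_of_dvd (by omega) hdn,
      ZMod.addOrderOf_natCast_of_dvd (by omega) hd'n] at horder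
    exact ((Nat.div_eq_iff_eq_of_dvd_dvd (by omega) hd'n hdn).mp horder).symm
  · rintro rfl
    exact ⟨id, ⟨fun _ _ => rfl, Function.bijective_id⟩, rfl, rfl⟩

theorem same_orbit_iff_eq_divisor (n : ℕ) (hn : 1 ≤ n) (d d' : ℕ)
    (hd : 0 < d) (hd' : 0 < d') (hdn : d ∣ n) (hd'n : d' ∣ n) :
    (∃ f : ZMod n → ZMod n, IsDihedralAut n f ∧
        f 0 = 0 ∧ f (d : ZMod n) = (d' : ZMod n)) ↔ d = d' :=
  same_orbit_iff_eq_divisor_general n hn d d' hdn hd'n
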